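/- Every b-coloring of the constructed graph H with k colors has precisely one b-vertex per color. Moreover, the set of b-vertices consists of {s*} ∪ V(G) ∪ Q ∪ A together with, for each edge e = uv of G, precisely one of the two vertices x_{e,u} and x_{e,v}. -/

import Mathlib

open Finset

/-- `a` is a b-vertex of the coloring `c`: it has a neighbor in every color class
other than its own. -/
def IsBVertex {VH : Type*} (H : SimpleGraph VH) {k : ℕ} (c : VH → Fin k) (a : VH) : Prop :=
  ∀ col : Fin k, col ≠ c a → ∃ b : VH, H.Adj a b ∧ c b = col

/-- `c` is a b-coloring of `H` with `k` colors: a proper coloring using all `k` colors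
in which every color class contains a b-vertex. -/
def IsBColoring {VH : Type*} (H : SimpleGraph VH) (k : ℕ) (c : VH → Fin k) : Prop :=
  (∀ ⦃a b : VH⦄, H.Adj a b → c a ≠ c b) ∧ Function.Surjective c ∧
    ∀ col : Fin k, ∃ a : VH, c a = col ∧ IsBVertex H c a

variable {V : Type*} [Fintype V] [DecidableEq V]

/-- `W`, the total weight of all edges. -/
def totW (G : SimpleGraph V) [DecidableRel G.Adj] (wt : Sym2 V → ℕ) : ℕ :=
  ∑ e ∈ G.edgeFinset, wt e

/-- `W_v`, the total weight of the edges incident with `v`. -/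
def vertW (G : SimpleGraph V) [DecidableRel G.Adj] (wt : Sym2 V → ℕ) (v : V) : ℕ :=
  ∑ e ∈ G.edgeFinset.filter (fun e => v ∈ e), wt e

/-- `k = 2W + 3m + n + 2`. -/
def numColors (G : SimpleGraph V) [DecidableRel G.Adj] (wt : Sym2 V → ℕ) : ℕ :=
  2 * totW G wt + 3 * G.edgeFinset.card + Fintype.card V + 2

/-- An orientation of `(G, wt)` (given by choosing a head `o e ∈ e` for every edge `e`)
is circulating if, at every vertex, the entering weight equals the leaving weight. -/
def IsCirculating (G : SimpleGraph V) [DecidableRel G.Adj] (wt : Sym2 V → ℕ)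
    (o : Sym2 V → V) : Prop :=
  (∀ e ∈ G.edgeFinset, o e ∈ e) ∧
    ∀ v : V,
      ∑ e ∈ G.edgeFinset.filter (fun e => v ∈ e ∧ o e = v), wt e =
        ∑ e ∈ G.edgeFinset.filter (fun e => v ∈ e ∧ o e ≠ v), wt e

/-- The data of the construction of the graph `H` from `(G, wt)`. -/
structure GadgetData (V : Type*) [Fintype V] [DecidableEq V]
    (G : SimpleGraph V) [DecidableRel G.Adj] (wt : Sym2 V → ℕ) where
  /-- the vertex type of `H` -/
  VH : Type*
  fintypeVH : Fintype VH
  decEqVH : DecidableEq VH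
  /-- the graph `H` -/
  H : SimpleGraph VH
  decAdj : DecidableRel H.Adj
  /-- the center `s*` of the superstar -/
  sstar : VH
  /-- the leaves of the superstar -/
  Sleaves : Finset VH
  /-- the centers of the anonymous stars -/
  Acenters : Finset VH
  /-- the leaves of each anonymous star -/
  Aleaves : VH → Finset VH
  /-- the sets `L_{e,v}` (subsets of the superstar leaves) -/
  L : Sym2 V → V → Finset VH
  /-- the copy of a vertex of `G` inside `H` -/
  orig : V → VH
  /-- the sets `P_v` -/
  P : V → Finset VH
  /-- the vertices `x_{e,v}` -/
  x : Sym2 V → V → VH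
  /-- the sets `Y_e` -/
  Y : Sym2 V → Finset VH
  /-- the sets `Z_e` -/
  Z : Sym2 V → Finset VH
  /-- the vertices `q_{e,1}, q_{e,2}` -/
  q : Sym2 V → Fin 2 → VH

namespace GadgetData

variable {G : SimpleGraph V} [DecidableRel G.Adj] {wt : Sym2 V → ℕ}

/-- The set `X = {x_{e,v} : v ∈ e ∈ E(G)}`. -/
def Xset (g : GadgetData V G wt) : Finset g.VH :=
  letI := g.fintypeVH; letI := g.decEqVH
  G.edgeFinset.biUnion fun e => (Finset.univ.filter fun v => v ∈ e).image (g.x e)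

/-- The set `Q = {q_{e,1}, q_{e,2} : e ∈ E(G)}`. -/
def Qset (g : GadgetData V G wt) : Finset g.VH :=
  letI := g.decEqVH
  G.edgeFinset.biUnion fun e => {g.q e 0, g.q e 1}

/-- The parts into which the vertex set of `H` is partitioned. -/
def parts (g : GadgetData V G wt) : List (Finset g.VH) :=
  letI := g.fintypeVH; letI := g.decEqVH
  [{g.sstar}, g.Sleaves, g.Acenters, g.Acenters.biUnion g.Aleaves,
    Finset.univ.image g.orig, Finset.univ.biUnion g.P,
    g.Xset, G.edgeFinset.biUnion g.Y, G.edgeFinset.biUnion g.Z, g.Qset]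

/-- One directional specification of the adjacencies of `H`. -/
def AdjSpec (g : GadgetData V G wt) (a b : g.VH) : Prop :=
  (a = g.sstar ∧ b ∈ g.Sleaves) ∨
  (∃ s ∈ g.Acenters, a = s ∧ b ∈ g.Aleaves s) ∨
  (∃ v : V, a = g.orig v ∧ b ∈ g.P v) ∨
  (∃ e ∈ G.edgeFinset, ∃ v : V, v ∈ e ∧ a = g.orig v ∧ (b ∈ g.L e v ∨ b ∈ g.Y e)) ∨
  (∃ e ∈ G.edgeFinset, ∃ v : V, v ∈ e ∧ a = g.x e v ∧
    (b ∈ g.Y e ∨ b ∈ g.Z e ∨ b ∈ g.L e v)) ∨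
  (∃ e ∈ G.edgeFinset, a = g.q e 0 ∧ b = g.q e 1) ∨
  (∃ e ∈ G.edgeFinset, ∃ h : Fin 2, a = g.q e h ∧
    (b ∈ g.Z e ∨ (∃ v : V, v ∈ e ∧ b ∈ g.L e v) ∨ (∃ v : V, v ∈ e ∧ b = g.x e v)))

/-- Degree in `H`. -/
def deg (g : GadgetData V G wt) (a : g.VH) : ℕ :=
  letI := g.fintypeVH; letI := g.decEqVH; letI := g.decAdj
  g.H.degree a

/-- The set `{s*} ∪ V(G) ∪ Q ∪ A ∪ X`. -/
def bigSet (g : GadgetData V G wt) : Finset g.VH :=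
  letI := g.fintypeVH; letI := g.decEqVH
  {g.sstar} ∪ Finset.univ.image g.orig ∪ g.Qset ∪ g.Acenters ∪ g.Xset

end GadgetData

/-- The construction of the graph `H` from `(G, wt)`: the data together with all the
requirements (sizes of the parts, their disjointness, and the adjacency relation). -/
structure Gadget (V : Type*) [Fintype V] [DecidableEq V]
    (G : SimpleGraph V) [DecidableRel G.Adj] (wt : Sym2 V → ℕ)
    extends GadgetData V G wt where
  card_Sleaves : Sleaves.card = numColors G wt - 1
  card_Acenters : Acenters.card = 2 * totW G wt + 1
  card_Aleaves : ∀ s ∈ Acenters, (Aleaves s).card = numColors G wt - 1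
  Aleaves_disjoint : ∀ s ∈ Acenters, ∀ s' ∈ Acenters, s ≠ s' →
    Disjoint (Aleaves s) (Aleaves s')
  L_subset : ∀ e ∈ G.edgeFinset, ∀ v ∈ e, L e v ⊆ Sleaves
  card_L : ∀ e ∈ G.edgeFinset, ∀ v ∈ e, (L e v).card = wt e
  L_disjoint : ∀ e ∈ G.edgeFinset, ∀ v ∈ e, ∀ e' ∈ G.edgeFinset, ∀ v' ∈ e',
    (e, v) ≠ (e', v') → Disjoint (L e v) (L e' v')
  card_P : ∀ v : V, 2 * (P v).card + 3 * vertW G wt v + 2 = 2 * numColors G wt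
  card_Y : ∀ e ∈ G.edgeFinset, (Y e).card = wt e
  card_Z : ∀ e ∈ G.edgeFinset, (Z e).card + 2 * wt e + 3 = numColors G wt
  orig_inj : Function.Injective orig
  P_disjoint : ∀ v v' : V, v ≠ v' → Disjoint (P v) (P v')
  x_inj : ∀ e ∈ G.edgeFinset, ∀ v ∈ e, ∀ e' ∈ G.edgeFinset, ∀ v' ∈ e',
    x e v = x e' v' → (e, v) = (e', v')
  Y_disjoint : ∀ e ∈ G.edgeFinset, ∀ e' ∈ G.edgeFinset, e ≠ e' → Disjoint (Y e) (Y e')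
  Z_disjoint : ∀ e ∈ G.edgeFinset, ∀ e' ∈ G.edgeFinset, e ≠ e' → Disjoint (Z e) (Z e')
  q_inj : ∀ e ∈ G.edgeFinset, ∀ h : Fin 2, ∀ e' ∈ G.edgeFinset, ∀ h' : Fin 2,
    q e h = q e' h' → (e, h) = (e', h')
  parts_disjoint : toGadgetData.parts.Pairwise Disjoint
  parts_cover : ∀ a : VH, ∃ p ∈ toGadgetData.parts, a ∈ p
  adj_iff : ∀ a b : VH, H.Adj a b ↔
    toGadgetData.AdjSpec a b ∨ toGadgetData.AdjSpec b a

/-!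
A b-vertex has at least `k - 1` neighbours. Every vertex of `H` outside `{s*} ∪ V(G) ∪ A ∪ X ∪ Q`
has fewer, so all b-vertices lie in this set, which consists of `2W + n + 2` vertices outside the
edge gadgets and the four vertices `x_{e,u}, x_{e,v}, q_{e,1}, q_{e,2}` of each edge `e`. A vertex
`x_{e,u}` has at most `k - 1` neighbours, so if both `x`-vertices of `e` are b-vertices, each sees
every other color exactly once, and the color of a vertex of `Y_e` then appears around neither
`q_{e,h}`. Hence every edge gadget holds at most three b-vertices, and there are at most
`2W + n + 2 + 3m = k` b-vertices in total. As every color class contains one, all these bounds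
are attained: there is exactly one b-vertex per color, `s*`, `V(G)`, `A` and `Q` consist of
b-vertices, and each edge gadget contains exactly one b-vertex among its two `x`-vertices.
-/

section BColoring

variable {α : Type*} [Fintype α] {H : SimpleGraph α} {k : ℕ} {c : α → Fin k}

theorem IsBVertex.sub_one_le_card_image [DecidableRel H.Adj] {a : α} (ha : IsBVertex H c a) :
    k - 1 ≤ #((H.neighborFinset a).image c) := by
  have hsub : univ.erase (c a) ⊆ (H.neighborFinset a).image c := fun col hcol => by
    obtain ⟨b, hab, rfl⟩ := ha col (ne_of_mem_erase hcol)
    exact mem_image_of_mem c ((H.mem_neighborFinset a b).mpr hab)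
  simpa using card_le_card hsub

theorem IsBVertex.sub_one_le_card_neighborFinset [DecidableRel H.Adj] {a : α}
    (ha : IsBVertex H c a) : k - 1 ≤ #(H.neighborFinset a) :=
  ha.sub_one_le_card_image.trans card_image_le

theorem IsBVertex.injOn_neighborFinset [DecidableRel H.Adj] {a : α} (ha : IsBVertex H c a)
    (hdeg : #(H.neighborFinset a) ≤ k - 1) : Set.InjOn c (H.neighborFinset a) :=
  card_image_iff.mp (card_image_le.antisymm (hdeg.trans ha.sub_one_le_card_image))

variable [DecidablePred (IsBVertex H c)]

theorem IsBColoring.image_bVertices (hc : IsBColoring H k c) :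
    ({a | IsBVertex H c a} : Finset α).image c = univ :=
  eq_univ_of_forall fun col => by
    obtain ⟨a, rfl, ha⟩ := hc.2.2 col
    exact mem_image_of_mem c (mem_filter.mpr ⟨mem_univ a, ha⟩)

theorem IsBColoring.le_card_bVertices (hc : IsBColoring H k c) :
    k ≤ #({a | IsBVertex H c a} : Finset α) := by
  simpa [hc.image_bVertices] using card_image_le (s := ({a | IsBVertex H c a} : Finset α)) (f := c)

theorem IsBColoring.existsUnique_bVertex_of_card_le (hc : IsBColoring H k c)
    (hcard : #({a | IsBVertex H c a} : Finset α) ≤ k) (col : Fin k) :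
    ∃! a, c a = col ∧ IsBVertex H c a := by
  have hinj : Set.InjOn c ({a | IsBVertex H c a} : Finset α) :=
    card_image_iff.mp (by simpa [hc.image_bVertices] using hc.le_card_bVertices.antisymm hcard)
  obtain ⟨a, ha, hab⟩ := hc.2.2 col
  refine ⟨a, ⟨ha, hab⟩, fun b ⟨hb, hbb⟩ => hinj ?_ ?_ (hb.trans ha.symm)⟩ <;> simpa

end BColoring

section Counting

variable {α ι : Type*} [DecidableEq α] {B S : Finset α} {E : Finset ι} {F : ι → Finset α} {n : ℕ}

theorem card_le_card_inter_add_sum (h : B ⊆ S ∪ E.biUnion F) :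
    #B ≤ #(B ∩ S) + ∑ i ∈ E, #(B ∩ F i) := by
  have hB : B = B ∩ S ∪ E.biUnion (fun i => B ∩ F i) := by
    rw [← inter_biUnion, ← inter_union_distrib_left, inter_eq_left.mpr h]
  calc #B = #(B ∩ S ∪ E.biUnion fun i => B ∩ F i) := congrArg card hB
    _ ≤ #(B ∩ S) + #(E.biUnion fun i => B ∩ F i) := card_union_le _ _
    _ ≤ _ := Nat.add_le_add_left card_biUnion_le _

theorem card_le_card_add_mul (h : B ⊆ S ∪ E.biUnion F) (hF : ∀ i ∈ E, #(B ∩ F i) ≤ n) :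
    #B ≤ #S + n * #E :=
  calc #B ≤ #(B ∩ S) + ∑ i ∈ E, #(B ∩ F i) := card_le_card_inter_add_sum h
    _ ≤ #S + n * #E := add_le_add (card_le_card inter_subset_right)
        (by simpa [mul_comm] using sum_le_card_nsmul E _ n hF)

theorem subset_and_card_inter_eq_of_le_card (h : B ⊆ S ∪ E.biUnion F)
    (hF : ∀ i ∈ E, #(B ∩ F i) ≤ n) (hB : #S + n * #E ≤ #B) :
    S ⊆ B ∧ ∀ i ∈ E, #(B ∩ F i) = n := by
  have hsum := sum_le_card_nsmul E _ n hF
  have hS := card_le_card (inter_subset_right (s₁ := B) (s₂ := S))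
  have hcount := card_le_card_inter_add_sum h
  simp only [smul_eq_mul] at hsum
  constructor
  · exact inter_eq_right.mp (eq_of_subset_of_card_le inter_subset_right (by linarith))
  · refine (sum_eq_sum_iff_of_le hF).mp ?_
    simp only [sum_const, smul_eq_mul]
    linarith

theorem card_inter_four_le_three {a b c d : α} (h : a ∈ B → b ∈ B → c ∉ B ∧ d ∉ B) :
    #(B ∩ {a, b, c, d}) ≤ 3 := by
  have two_lt (x y : α) : #({x, y} : Finset α) < 3 := card_le_two.trans_lt (by norm_num)
  rw [inter_comm]
  by_cases ha : a ∈ B <;> by_cases hb : b ∈ B <;> by_cases hc : c ∈ B <;> by_cases hd : d ∈ B <;>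
    simp_all [insert_inter_of_mem, insert_inter_of_notMem, card_le_three, (two_lt _ _).le]

theorem mem_of_card_inter_four_eq_three {a b c d : α} (h : a ∈ B → b ∈ B → c ∉ B ∧ d ∉ B)
    (h3 : #(B ∩ {a, b, c, d}) = 3) : c ∈ B ∧ d ∈ B ∧ (a ∈ B ↔ b ∉ B) := by
  have two_lt (x y : α) : #({x, y} : Finset α) < 3 := card_le_two.trans_lt (by norm_num)
  rw [inter_comm] at h3
  by_cases ha : a ∈ B <;> by_cases hb : b ∈ B <;> by_cases hc : c ∈ B <;> by_cases hd : d ∈ B <;>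
    simp_all [insert_inter_of_mem, insert_inter_of_notMem, (two_lt _ _).ne]

end Counting

theorem Sym2.card_toFinset_le_two {α : Type*} [DecidableEq α] (z : Sym2 α) : #z.toFinset ≤ 2 := by
  rw [Sym2.card_toFinset]; split <;> omega

section NumColors

variable {V : Type*} [Fintype V] {G : SimpleGraph V} [DecidableRel G.Adj] {wt : Sym2 V → ℕ}

theorem three_le_numColors [Nonempty V] : 3 ≤ numColors G wt := by
  have := Fintype.card_pos (α := V)
  unfold numColors; omega

theorem eight_le_numColors (hwt : ∀ e ∈ G.edgeFinset, 1 ≤ wt e) {e : Sym2 V}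
    (he : e ∈ G.edgeFinset) : 8 ≤ numColors G wt := by
  have hW : 1 ≤ totW G wt := (hwt e he).trans (single_le_sum (fun _ _ => Nat.zero_le _) he)
  have hm : 1 ≤ #G.edgeFinset := card_pos.mpr ⟨e, he⟩
  have hn : 1 ≤ Fintype.card V := Fintype.card_pos_iff.mpr ⟨e.out.1⟩
  unfold numColors; omega

end NumColors

namespace Gadget

variable {G : SimpleGraph V} [DecidableRel G.Adj] {wt : Sym2 V → ℕ}

section Parts

variable (g : Gadget V G wt)

instance : Fintype g.VH := g.fintypeVH
instance : DecidableEq g.VH := g.decEqVH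
instance : DecidableRel g.H.Adj := g.decAdj

/-- Every impossible case of `adj_iff` identifies vertices from different parts; `grind`
refutes it by comparing part indices. -/
def partIndex (a : g.VH) : ℕ := g.parts.findIdx (a ∈ ·)

theorem partIndex_eq_of_mem {i : ℕ} {p : Finset g.VH} (hp : g.parts[i]? = some p) {a : g.VH}
    (ha : a ∈ p) : g.partIndex a = i := by
  obtain ⟨hi, rfl⟩ := List.getElem?_eq_some_iff.mp hp
  refine (List.findIdx_eq hi).mpr ⟨by simpa using ha, fun j hj => ?_⟩
  have := List.pairwise_iff_getElem.mp g.parts_disjoint j i (hj.trans hi) hi hj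
  simpa using Finset.disjoint_right.mp this ha

def core : Finset g.VH := {g.sstar} ∪ univ.image g.orig ∪ g.Acenters

def edgeCandidates (e : Sym2 V) : Finset g.VH := e.toFinset.image (g.x e) ∪ {g.q e 0, g.q e 1}

end Parts

variable {g : Gadget V G wt}

@[grind! .] theorem partIndex_sstar : g.partIndex g.sstar = 0 :=
  g.partIndex_eq_of_mem (i := 0) rfl (mem_singleton_self _)

@[grind →] theorem partIndex_of_mem_Sleaves {b : g.VH} (hb : b ∈ g.Sleaves) : g.partIndex b = 1 :=
  g.partIndex_eq_of_mem (i := 1) rfl hb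

@[grind →] theorem partIndex_of_mem_L {e : Sym2 V} {v : V} (he : e ∈ G.edgeFinset) (hv : v ∈ e)
    {b : g.VH} (hb : b ∈ g.L e v) : g.partIndex b = 1 :=
  partIndex_of_mem_Sleaves (g.L_subset e he v hv hb)

@[grind →] theorem partIndex_of_mem_Acenters {b : g.VH} (hb : b ∈ g.Acenters) :
    g.partIndex b = 2 :=
  g.partIndex_eq_of_mem (i := 2) rfl hb

@[grind →] theorem partIndex_of_mem_Aleaves {s b : g.VH} (hs : s ∈ g.Acenters)
    (hb : b ∈ g.Aleaves s) : g.partIndex b = 3 :=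
  g.partIndex_eq_of_mem (i := 3) rfl (mem_biUnion.mpr ⟨s, hs, hb⟩)

@[grind! .] theorem partIndex_orig (v : V) : g.partIndex (g.orig v) = 4 :=
  g.partIndex_eq_of_mem (i := 4) rfl (mem_image_of_mem _ (mem_univ v))

@[grind →] theorem partIndex_of_mem_P {v : V} {b : g.VH} (hb : b ∈ g.P v) : g.partIndex b = 5 :=
  g.partIndex_eq_of_mem (i := 5) rfl (mem_biUnion.mpr ⟨v, mem_univ _, hb⟩)

@[grind! .] theorem partIndex_x {e : Sym2 V} {v : V} (he : e ∈ G.edgeFinset) (hv : v ∈ e) :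
    g.partIndex (g.x e v) = 6 :=
  g.partIndex_eq_of_mem (i := 6) rfl <| mem_biUnion.mpr
    ⟨e, he, mem_image_of_mem _ (mem_filter.mpr ⟨mem_univ _, hv⟩)⟩

@[grind →] theorem partIndex_of_mem_Y {e : Sym2 V} (he : e ∈ G.edgeFinset) {b : g.VH}
    (hb : b ∈ g.Y e) : g.partIndex b = 7 :=
  g.partIndex_eq_of_mem (i := 7) rfl (mem_biUnion.mpr ⟨e, he, hb⟩)

@[grind →] theorem partIndex_of_mem_Z {e : Sym2 V} (he : e ∈ G.edgeFinset) {b : g.VH}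
    (hb : b ∈ g.Z e) : g.partIndex b = 8 :=
  g.partIndex_eq_of_mem (i := 8) rfl (mem_biUnion.mpr ⟨e, he, hb⟩)

@[grind! .] theorem partIndex_q {e : Sym2 V} (he : e ∈ G.edgeFinset) (h : Fin 2) :
    g.partIndex (g.q e h) = 9 :=
  g.partIndex_eq_of_mem (i := 9) rfl <| mem_biUnion.mpr ⟨e, he, by fin_cases h <;> simp⟩

@[grind →] theorem eq_of_x_eq {e e' : Sym2 V} {v v' : V} (he : e ∈ G.edgeFinset) (hv : v ∈ e)
    (he' : e' ∈ G.edgeFinset) (hv' : v' ∈ e') (h : g.x e v = g.x e' v') : e = e' ∧ v = v' :=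
  Prod.ext_iff.mp (g.x_inj e he v hv e' he' v' hv' h)

@[grind →] theorem eq_of_q_eq {e e' : Sym2 V} {i j : Fin 2} (he : e ∈ G.edgeFinset)
    (he' : e' ∈ G.edgeFinset) (h : g.q e i = g.q e' j) : e = e' ∧ i = j :=
  Prod.ext_iff.mp (g.q_inj e he i e' he' j h)

@[grind →] theorem eq_of_mem_L {e e' : Sym2 V} {v v' : V} (he : e ∈ G.edgeFinset) (hv : v ∈ e)
    (he' : e' ∈ G.edgeFinset) (hv' : v' ∈ e') {b : g.VH} (hb : b ∈ g.L e v)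
    (hb' : b ∈ g.L e' v') : e = e' ∧ v = v' := by
  by_contra hne
  exact Finset.disjoint_left.mp (g.L_disjoint e he v hv e' he' v' hv' (by grind)) hb hb'

@[grind →] theorem eq_of_mem_Y {e e' : Sym2 V} (he : e ∈ G.edgeFinset) (he' : e' ∈ G.edgeFinset)
    {b : g.VH} (hb : b ∈ g.Y e) (hb' : b ∈ g.Y e') : e = e' := by
  by_contra hne
  exact Finset.disjoint_left.mp (g.Y_disjoint e he e' he' hne) hb hb'

@[grind →] theorem eq_of_mem_Z {e e' : Sym2 V} (he : e ∈ G.edgeFinset) (he' : e' ∈ G.edgeFinset)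
    {b : g.VH} (hb : b ∈ g.Z e) (hb' : b ∈ g.Z e') : e = e' := by
  by_contra hne
  exact Finset.disjoint_left.mp (g.Z_disjoint e he e' he' hne) hb hb'

@[grind →] theorem eq_of_mem_P {v v' : V} {b : g.VH} (hb : b ∈ g.P v) (hb' : b ∈ g.P v') :
    v = v' := by
  by_contra hne
  exact Finset.disjoint_left.mp (g.P_disjoint v v' hne) hb hb'

@[grind →] theorem eq_of_mem_Aleaves {s s' : g.VH} (hs : s ∈ g.Acenters) (hs' : s' ∈ g.Acenters)
    {b : g.VH} (hb : b ∈ g.Aleaves s) (hb' : b ∈ g.Aleaves s') : s = s' := by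
  by_contra hne
  exact Finset.disjoint_left.mp (g.Aleaves_disjoint s hs s' hs' hne) hb hb'

theorem adj_x_cases {e : Sym2 V} {u : V} (he : e ∈ G.edgeFinset) (hu : u ∈ e) {b : g.VH}
    (hb : g.H.Adj (g.x e u) b) :
    b ∈ g.Y e ∨ b ∈ g.Z e ∨ b ∈ g.L e u ∨ b = g.q e 0 ∨ b = g.q e 1 := by
  rcases (g.adj_iff _ _).mp hb with (h|h|h|h|h|h|h) | (h|h|h|h|h|h|h) <;> grind

theorem adj_q_cases {e : Sym2 V} {i : Fin 2} (he : e ∈ G.edgeFinset) {b : g.VH}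
    (hb : g.H.Adj (g.q e i) b) :
    b ∈ g.Z e ∨ (∃ v ∈ e, b ∈ g.L e v ∨ b = g.x e v) ∨ b = g.q e 0 ∨ b = g.q e 1 := by
  rcases (g.adj_iff _ _).mp hb with (h|h|h|h|h|h|h) | (h|h|h|h|h|h|h) <;> grind

theorem adj_cases_of_mem_Sleaves {b a : g.VH} (hb : b ∈ g.Sleaves) (hadj : g.H.Adj b a) :
    a = g.sstar ∨ ∃ e ∈ G.edgeFinset, ∃ v ∈ e, b ∈ g.L e v ∧
      (a = g.orig v ∨ a = g.x e v ∨ a = g.q e 0 ∨ a = g.q e 1) := by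
  rcases (g.adj_iff _ _).mp hadj with (h|h|h|h|h|h|h) | (h|h|h|h|h|h|h) <;> grind

theorem eq_of_adj_of_mem_Aleaves {s b a : g.VH} (hs : s ∈ g.Acenters) (hb : b ∈ g.Aleaves s)
    (hadj : g.H.Adj b a) : a = s := by
  rcases (g.adj_iff _ _).mp hadj with (h|h|h|h|h|h|h) | (h|h|h|h|h|h|h) <;> grind

theorem eq_of_adj_of_mem_P {v : V} {b a : g.VH} (hb : b ∈ g.P v) (hadj : g.H.Adj b a) :
    a = g.orig v := by
  rcases (g.adj_iff _ _).mp hadj with (h|h|h|h|h|h|h) | (h|h|h|h|h|h|h) <;> grind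

theorem adj_cases_of_mem_Y {e : Sym2 V} (he : e ∈ G.edgeFinset) {b a : g.VH} (hb : b ∈ g.Y e)
    (hadj : g.H.Adj b a) : ∃ v ∈ e, a = g.orig v ∨ a = g.x e v := by
  rcases (g.adj_iff _ _).mp hadj with (h|h|h|h|h|h|h) | (h|h|h|h|h|h|h) <;> grind

theorem adj_cases_of_mem_Z {e : Sym2 V} (he : e ∈ G.edgeFinset) {b a : g.VH} (hb : b ∈ g.Z e)
    (hadj : g.H.Adj b a) : (∃ v ∈ e, a = g.x e v) ∨ a = g.q e 0 ∨ a = g.q e 1 := by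
  rcases (g.adj_iff _ _).mp hadj with (h|h|h|h|h|h|h) | (h|h|h|h|h|h|h) <;> grind

theorem adj_x_of_mem_Y {e : Sym2 V} {u : V} (he : e ∈ G.edgeFinset) (hu : u ∈ e) {b : g.VH}
    (hb : b ∈ g.Y e) : g.H.Adj (g.x e u) b :=
  (g.adj_iff _ _).mpr <| .inl <| .inr <| .inr <| .inr <| .inr <| .inl ⟨e, he, u, hu, rfl, .inl hb⟩

theorem adj_x_of_mem_Z {e : Sym2 V} {u : V} (he : e ∈ G.edgeFinset) (hu : u ∈ e) {b : g.VH}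
    (hb : b ∈ g.Z e) : g.H.Adj (g.x e u) b :=
  (g.adj_iff _ _).mpr <| .inl <| .inr <| .inr <| .inr <| .inr <| .inl
    ⟨e, he, u, hu, rfl, .inr (.inl hb)⟩

theorem adj_x_of_mem_L {e : Sym2 V} {u : V} (he : e ∈ G.edgeFinset) (hu : u ∈ e) {b : g.VH}
    (hb : b ∈ g.L e u) : g.H.Adj (g.x e u) b :=
  (g.adj_iff _ _).mpr <| .inl <| .inr <| .inr <| .inr <| .inr <| .inl
    ⟨e, he, u, hu, rfl, .inr (.inr hb)⟩

theorem adj_x_q {e : Sym2 V} {u : V} (he : e ∈ G.edgeFinset) (hu : u ∈ e) (i : Fin 2) :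
    g.H.Adj (g.x e u) (g.q e i) :=
  (g.adj_iff _ _).mpr <| .inr <| .inr <| .inr <| .inr <| .inr <| .inr <| .inr
    ⟨e, he, i, rfl, .inr (.inr ⟨u, hu, rfl⟩)⟩

theorem exists_adj_x_of_adj_q {e : Sym2 V} {i : Fin 2} (he : e ∈ G.edgeFinset) {b : g.VH}
    (hb : g.H.Adj (g.q e i) b) : ∃ w ∈ e, g.H.Adj (g.x e w) b ∨ b = g.x e w := by
  have hu := Sym2.out_fst_mem e
  rcases adj_q_cases he hb with hZ | ⟨v, hv, hL | rfl⟩ | rfl | rfl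
  · exact ⟨_, hu, .inl (adj_x_of_mem_Z he hu hZ)⟩
  · exact ⟨v, hv, .inl (adj_x_of_mem_L he hv hL)⟩
  · exact ⟨v, hv, .inr rfl⟩
  · exact ⟨_, hu, .inl (adj_x_q he hu 0)⟩
  · exact ⟨_, hu, .inl (adj_x_q he hu 1)⟩

theorem not_adj_q_of_mem_Y {e : Sym2 V} {i : Fin 2} (he : e ∈ G.edgeFinset) {y : g.VH}
    (hy : y ∈ g.Y e) : ¬ g.H.Adj (g.q e i) y := fun h => by
  obtain ⟨v, hv, h' | h'⟩ := adj_cases_of_mem_Y he hy h.symm <;> grind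

theorem card_neighborFinset_x_le {e : Sym2 V} {u : V} (he : e ∈ G.edgeFinset) (hu : u ∈ e) :
    #(g.H.neighborFinset (g.x e u)) ≤ numColors G wt - 1 := by
  have hsub : g.H.neighborFinset (g.x e u) ⊆ g.Y e ∪ g.Z e ∪ g.L e u ∪ {g.q e 0, g.q e 1} :=
    fun b hb => by
      have := adj_x_cases he hu ((g.H.mem_neighborFinset _ _).mp hb)
      simp only [mem_union, mem_insert, mem_singleton]
      tauto
  have := card_le_card hsub
  have := card_union_le (g.Y e ∪ g.Z e ∪ g.L e u) {g.q e 0, g.q e 1}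
  have := card_union_le (g.Y e ∪ g.Z e) (g.L e u)
  have := card_union_le (g.Y e) (g.Z e)
  have := card_le_two (a := g.q e 0) (b := g.q e 1)
  have := g.card_Y e he
  have := g.card_L e he u hu
  have := g.card_Z e he
  omega

theorem edgeCandidates_mk (u v : V) :
    g.edgeCandidates s(u, v) = {g.x s(u, v) u, g.x s(u, v) v, g.q s(u, v) 0, g.q s(u, v) 1} := by
  rw [edgeCandidates, Sym2.toFinset_mk_eq, image_insert, image_singleton, insert_union,
    singleton_union]

theorem card_edgeCandidates_le (e : Sym2 V) : #(g.edgeCandidates e) ≤ 4 :=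
  calc #(g.edgeCandidates e) ≤ #(e.toFinset.image (g.x e)) + #{g.q e 0, g.q e 1} :=
        card_union_le _ _
    _ ≤ 2 + 2 := add_le_add (card_image_le.trans e.card_toFinset_le_two) card_le_two

theorem card_core : #g.core = 2 * totW G wt + Fintype.card V + 2 := by
  have h1 : Disjoint {g.sstar} (univ.image g.orig) :=
    disjoint_left.mpr fun a ha hb => by simp at ha hb; grind
  have h2 : Disjoint ({g.sstar} ∪ univ.image g.orig) g.Acenters :=
    disjoint_left.mpr fun a ha hb => by simp at ha; grind
  rw [core, card_union_of_disjoint h2, card_union_of_disjoint h1, card_singleton,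
    card_image_of_injective _ g.orig_inj, card_univ, g.card_Acenters]
  ring

theorem card_neighborFinset_lt_of_mem_Sleaves [Nonempty V] (hwt : ∀ e ∈ G.edgeFinset, 1 ≤ wt e)
    {b : g.VH} (hb : b ∈ g.Sleaves) : #(g.H.neighborFinset b) < numColors G wt - 1 := by
  by_cases hL : ∃ e ∈ G.edgeFinset, ∃ v ∈ e, b ∈ g.L e v
  · obtain ⟨e, he, v, hv, hbL⟩ := hL
    have hsub : g.H.neighborFinset b ⊆ {g.sstar, g.orig v, g.x e v, g.q e 0, g.q e 1} :=
      fun a ha => by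
        have := adj_cases_of_mem_Sleaves hb ((g.H.mem_neighborFinset _ _).mp ha)
        simp only [mem_insert, mem_singleton]
        grind
    have := (card_le_card hsub).trans card_le_five
    have := eight_le_numColors hwt he
    omega
  · have hsub : g.H.neighborFinset b ⊆ {g.sstar} := fun a ha => by
      have := adj_cases_of_mem_Sleaves hb ((g.H.mem_neighborFinset _ _).mp ha)
      simp only [mem_singleton]
      grind
    have := (card_le_card hsub).trans (card_singleton _).le
    have := three_le_numColors (G := G) (wt := wt)
    omega

theorem card_neighborFinset_lt_of_mem_Aleaves [Nonempty V] {s b : g.VH} (hs : s ∈ g.Acenters)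
    (hb : b ∈ g.Aleaves s) : #(g.H.neighborFinset b) < numColors G wt - 1 := by
  have hsub : g.H.neighborFinset b ⊆ {s} := fun a ha =>
    mem_singleton.mpr (eq_of_adj_of_mem_Aleaves hs hb ((g.H.mem_neighborFinset _ _).mp ha))
  have := (card_le_card hsub).trans (card_singleton _).le
  have := three_le_numColors (G := G) (wt := wt)
  omega

theorem card_neighborFinset_lt_of_mem_P [Nonempty V] {v : V} {b : g.VH} (hb : b ∈ g.P v) :
    #(g.H.neighborFinset b) < numColors G wt - 1 := by
  have hsub : g.H.neighborFinset b ⊆ {g.orig v} := fun a ha =>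
    mem_singleton.mpr (eq_of_adj_of_mem_P hb ((g.H.mem_neighborFinset _ _).mp ha))
  have := (card_le_card hsub).trans (card_singleton _).le
  have := three_le_numColors (G := G) (wt := wt)
  omega

theorem card_neighborFinset_lt_of_mem_Y (hwt : ∀ e ∈ G.edgeFinset, 1 ≤ wt e) {e : Sym2 V}
    (he : e ∈ G.edgeFinset) {b : g.VH} (hb : b ∈ g.Y e) :
    #(g.H.neighborFinset b) < numColors G wt - 1 := by
  have hsub : g.H.neighborFinset b ⊆ e.toFinset.image g.orig ∪ e.toFinset.image (g.x e) :=
    fun a ha => by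
      obtain ⟨v, hv, rfl | rfl⟩ := adj_cases_of_mem_Y he hb ((g.H.mem_neighborFinset _ _).mp ha)
      · exact mem_union_left _ (mem_image_of_mem _ (Sym2.mem_toFinset.mpr hv))
      · exact mem_union_right _ (mem_image_of_mem _ (Sym2.mem_toFinset.mpr hv))
  have := (card_le_card hsub).trans (card_union_le _ _)
  have := (card_image_le (f := g.orig)).trans e.card_toFinset_le_two
  have := (card_image_le (f := g.x e)).trans e.card_toFinset_le_two
  have := eight_le_numColors hwt he
  omega

theorem card_neighborFinset_lt_of_mem_Z (hwt : ∀ e ∈ G.edgeFinset, 1 ≤ wt e) {e : Sym2 V}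
    (he : e ∈ G.edgeFinset) {b : g.VH} (hb : b ∈ g.Z e) :
    #(g.H.neighborFinset b) < numColors G wt - 1 := by
  have hsub : g.H.neighborFinset b ⊆ g.edgeCandidates e := fun a ha => by
    rcases adj_cases_of_mem_Z he hb ((g.H.mem_neighborFinset _ _).mp ha) with
      ⟨v, hv, rfl⟩ | rfl | rfl
    · exact mem_union_left _ (mem_image_of_mem _ (Sym2.mem_toFinset.mpr hv))
    all_goals simp [edgeCandidates]
  have := (card_le_card hsub).trans (card_edgeCandidates_le e)
  have := eight_le_numColors hwt he
  omega

variable {c : g.VH → Fin (numColors G wt)}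

theorem mem_core_union_of_isBVertex [Nonempty V] (hwt : ∀ e ∈ G.edgeFinset, 1 ≤ wt e)
    {a : g.VH} (ha : IsBVertex g.H c a) : a ∈ g.core ∪ G.edgeFinset.biUnion g.edgeCandidates := by
  have hdeg := ha.sub_one_le_card_neighborFinset
  obtain ⟨p, hp, hap⟩ := g.parts_cover a
  simp only [GadgetData.parts, List.mem_cons, List.not_mem_nil, or_false] at hp
  rcases hp with rfl | rfl | rfl | rfl | rfl | rfl | rfl | rfl | rfl | rfl
  · obtain rfl := mem_singleton.mp hap
    simp [core]
  · exact absurd hdeg (card_neighborFinset_lt_of_mem_Sleaves hwt hap).not_ge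
  · simp [core, hap]
  · obtain ⟨s, hs, hb⟩ := mem_biUnion.mp hap
    exact absurd hdeg (card_neighborFinset_lt_of_mem_Aleaves hs hb).not_ge
  · obtain ⟨v, -, rfl⟩ := mem_image.mp hap
    simp [core]
  · obtain ⟨v, -, hb⟩ := mem_biUnion.mp hap
    exact absurd hdeg (card_neighborFinset_lt_of_mem_P hb).not_ge
  · obtain ⟨e, he, hx⟩ := mem_biUnion.mp hap
    obtain ⟨v, hv, rfl⟩ := mem_image.mp hx
    exact mem_union_right _ <| mem_biUnion.mpr ⟨e, he, mem_union_left _ <|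
      mem_image_of_mem _ (Sym2.mem_toFinset.mpr (mem_filter.mp hv).2)⟩
  · obtain ⟨e, he, hb⟩ := mem_biUnion.mp hap
    exact absurd hdeg (card_neighborFinset_lt_of_mem_Y hwt he hb).not_ge
  · obtain ⟨e, he, hb⟩ := mem_biUnion.mp hap
    exact absurd hdeg (card_neighborFinset_lt_of_mem_Z hwt he hb).not_ge
  · obtain ⟨e, he, hq⟩ := mem_biUnion.mp hap
    exact mem_union_right _ <| mem_biUnion.mpr ⟨e, he, mem_union_right _ hq⟩

/-- If both `x`-vertices of an edge are b-vertices, their neighbourhoods are rainbow, so the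
color of a `Y`-vertex can occur around `q` neither inside these neighbourhoods nor at the `x`'s. -/
theorem not_isBVertex_q (hwt : ∀ e ∈ G.edgeFinset, 1 ≤ wt e)
    (hprop : ∀ ⦃a b : g.VH⦄, g.H.Adj a b → c a ≠ c b) {u v : V} (he : s(u, v) ∈ G.edgeFinset)
    (hu : IsBVertex g.H c (g.x s(u, v) u)) (hv : IsBVertex g.H c (g.x s(u, v) v)) (i : Fin 2) :
    ¬ IsBVertex g.H c (g.q s(u, v) i) := by
  intro hq
  have hx : ∀ w ∈ s(u, v), IsBVertex g.H c (g.x s(u, v) w) := by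
    intro w hw
    rcases Sym2.mem_iff.mp hw with rfl | rfl <;> assumption
  have rainbow (w : V) (hw : w ∈ s(u, v)) :
      Set.InjOn c (g.H.neighborFinset (g.x s(u, v) w)) :=
    (hx w hw).injOn_neighborFinset (card_neighborFinset_x_le he hw)
  obtain ⟨y, hy⟩ : (g.Y s(u, v)).Nonempty := card_pos.mp (g.card_Y _ he ▸ hwt _ he)
  have hyN (w : V) (hw : w ∈ s(u, v)) : y ∈ g.H.neighborFinset (g.x s(u, v) w) :=
    (g.H.mem_neighborFinset _ _).mpr (adj_x_of_mem_Y he hw hy)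
  have hcy : c y ≠ c (g.q s(u, v) i) := fun h => by
    have hu' := Sym2.mem_mk_left u v
    have := rainbow u hu' (hyN u hu')
      ((g.H.mem_neighborFinset _ _).mpr (adj_x_q he hu' i)) h
    grind
  obtain ⟨b, hqb, hcb⟩ := hq (c y) hcy
  obtain ⟨w, hw, hxb | rfl⟩ := exists_adj_x_of_adj_q he hqb
  · obtain rfl := rainbow w hw ((g.H.mem_neighborFinset _ _).mpr hxb) (hyN w hw) hcb
    exact not_adj_q_of_mem_Y he hy hqb
  · exact hprop (adj_x_of_mem_Y he hw hy) hcb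

section Count

variable [DecidablePred (IsBVertex g.H c)]

theorem card_bVertices_inter_edgeCandidates_le (hwt : ∀ e ∈ G.edgeFinset, 1 ≤ wt e)
    (hprop : ∀ ⦃a b : g.VH⦄, g.H.Adj a b → c a ≠ c b) {e : Sym2 V} (he : e ∈ G.edgeFinset) :
    #(({a | IsBVertex g.H c a} : Finset g.VH) ∩ g.edgeCandidates e) ≤ 3 := by
  induction e using Sym2.ind with
  | h u v =>
    rw [edgeCandidates_mk]
    refine card_inter_four_le_three fun hu hv => ?_
    simp only [mem_filter, mem_univ, true_and] at hu hv ⊢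
    exact ⟨not_isBVertex_q hwt hprop he hu hv 0, not_isBVertex_q hwt hprop he hu hv 1⟩

theorem isBVertex_of_card_bVertices_inter_edgeCandidates_eq (hwt : ∀ e ∈ G.edgeFinset, 1 ≤ wt e)
    (hprop : ∀ ⦃a b : g.VH⦄, g.H.Adj a b → c a ≠ c b) {u v : V} (he : s(u, v) ∈ G.edgeFinset)
    (h3 : #(({a | IsBVertex g.H c a} : Finset g.VH) ∩ g.edgeCandidates s(u, v)) = 3) :
    (∀ i, IsBVertex g.H c (g.q s(u, v) i)) ∧
      (IsBVertex g.H c (g.x s(u, v) u) ↔ ¬ IsBVertex g.H c (g.x s(u, v) v)) := by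
  rw [edgeCandidates_mk] at h3
  have := mem_of_card_inter_four_eq_three (fun hu hv => ?_) h3
  · simp only [mem_filter, mem_univ, true_and] at this
    exact ⟨fun i => by fin_cases i <;> simp [this], this.2.2⟩
  · simp only [mem_filter, mem_univ, true_and] at hu hv ⊢
    exact ⟨not_isBVertex_q hwt hprop he hu hv 0, not_isBVertex_q hwt hprop he hu hv 1⟩

end Count

theorem setOf_isBVertex_eq
    (hsub : ∀ a, IsBVertex g.H c a → a ∈ g.core ∪ G.edgeFinset.biUnion g.edgeCandidates)
    (hcore : ∀ a ∈ g.core, IsBVertex g.H c a)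
    (hq : ∀ e ∈ G.edgeFinset, ∀ i, IsBVertex g.H c (g.q e i)) :
    {a : g.VH | IsBVertex g.H c a} =
      ({g.sstar} : Set g.VH) ∪ Set.range g.orig ∪
        {a : g.VH | ∃ e ∈ G.edgeFinset, ∃ h : Fin 2, a = g.q e h} ∪
        (↑g.Acenters : Set g.VH) ∪
        {a : g.VH | ∃ e ∈ G.edgeFinset, ∃ v : V, v ∈ e ∧
          IsBVertex g.H c (g.x e v) ∧ a = g.x e v} := by
  ext a
  simp only [Set.mem_ofPred_eq, Set.mem_union, Set.mem_singleton_iff, Set.mem_range, mem_coe]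
  constructor
  · intro ha
    have := hsub a ha
    simp only [core, edgeCandidates, mem_union, mem_singleton, mem_image, mem_univ, true_and,
      mem_biUnion, mem_insert, Sym2.mem_toFinset] at this
    grind
  · rintro ((((rfl | ⟨v, rfl⟩) | ⟨e, he, i, rfl⟩) | ha) | ⟨e, he, v, hv, hx, rfl⟩)
    · exact hcore _ (by simp [core])
    · exact hcore _ (by simp [core])
    · exact hq e he i
    · exact hcore _ (by simp [core, ha])
    · exact hx

end Gadget

theorem bVertices_characterization_general
    {V : Type*} [Fintype V] [DecidableEq V] (G : SimpleGraph V) [DecidableRel G.Adj]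
    (wt : Sym2 V → ℕ) (hconn : G.Connected)
    (hwt : ∀ e ∈ G.edgeFinset, 1 ≤ wt e)
    (g : Gadget V G wt)
    (c : g.VH → Fin (numColors G wt)) (hc : IsBColoring g.H (numColors G wt) c) :
    (∀ col : Fin (numColors G wt), ∃! a : g.VH, c a = col ∧ IsBVertex g.H c a) ∧
    (∀ e ∈ G.edgeFinset, ∀ u v : V, e = s(u, v) → u ≠ v →
      (IsBVertex g.H c (g.x e u) ↔ ¬ IsBVertex g.H c (g.x e v))) ∧
    {a : g.VH | IsBVertex g.H c a} =
      ({g.sstar} : Set g.VH) ∪ Set.range g.orig ∪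
        {a : g.VH | ∃ e ∈ G.edgeFinset, ∃ h : Fin 2, a = g.q e h} ∪
        (↑g.Acenters : Set g.VH) ∪
        {a : g.VH | ∃ e ∈ G.edgeFinset, ∃ v : V, v ∈ e ∧
          IsBVertex g.H c (g.x e v) ∧ a = g.x e v} := by
  classical
  have := hconn.nonempty
  set B : Finset g.VH := {a | IsBVertex g.H c a}
  have hsub : B ⊆ g.core ∪ G.edgeFinset.biUnion g.edgeCandidates := fun a ha =>
    Gadget.mem_core_union_of_isBVertex hwt (mem_filter.mp ha).2
  have hle (e : Sym2 V) (he : e ∈ G.edgeFinset) : #(B ∩ g.edgeCandidates e) ≤ 3 :=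
    Gadget.card_bVertices_inter_edgeCandidates_le hwt hc.1 he
  have hk : numColors G wt = #g.core + 3 * #G.edgeFinset := by
    rw [Gadget.card_core, numColors]; ring
  obtain ⟨hcore, hthree⟩ :=
    subset_and_card_inter_eq_of_le_card hsub hle (hk ▸ hc.le_card_bVertices)
  have hedge (e : Sym2 V) (he : e ∈ G.edgeFinset) (u v : V) (huv : e = s(u, v)) :
      (∀ i, IsBVertex g.H c (g.q e i)) ∧
        (IsBVertex g.H c (g.x e u) ↔ ¬ IsBVertex g.H c (g.x e v)) := by
    subst huv
    exact Gadget.isBVertex_of_card_bVertices_inter_edgeCandidates_eq hwt hc.1 he (hthree _ he)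
  have hcard : #B ≤ numColors G wt := hk ▸ card_le_card_add_mul hsub hle
  refine ⟨hc.existsUnique_bVertex_of_card_le hcard,
    fun e he u v huv _ => (hedge e he u v huv).2, ?_⟩
  refine Gadget.setOf_isBVertex_eq (fun a ha => hsub (by simpa [B] using ha))
    (fun a ha => by simpa [B] using hcore ha) fun e he i => ?_
  induction e using Sym2.ind with
  | h u v => exact (hedge _ he u v rfl).1 i

/-- Every b-coloring of `H` with `k` colors has precisely one b-vertex per
color, and the b-vertices are `{s*} ∪ V(G) ∪ Q ∪ A` together with, for each edge
`e = uv` of `G`, precisely one of `x_{e,u}` and `x_{e,v}`. -/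
theorem bVertices_characterization
    {V : Type*} [Fintype V] [DecidableEq V] (G : SimpleGraph V) [DecidableRel G.Adj]
    (wt : Sym2 V → ℕ) (hconn : G.Connected)
    (hwt : ∀ e ∈ G.edgeFinset, 1 ≤ wt e)
    (heven : ∀ v : V, Even (vertW G wt v))
    (g : Gadget V G wt)
    (c : g.VH → Fin (numColors G wt)) (hc : IsBColoring g.H (numColors G wt) c) :
    (∀ col : Fin (numColors G wt), ∃! a : g.VH, c a = col ∧ IsBVertex g.H c a) ∧
    (∀ e ∈ G.edgeFinset, ∀ u v : V, e = s(u, v) → u ≠ v →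
      (IsBVertex g.H c (g.x e u) ↔ ¬ IsBVertex g.H c (g.x e v))) ∧
    {a : g.VH | IsBVertex g.H c a} =
      ({g.sstar} : Set g.VH) ∪ Set.range g.orig ∪
        {a : g.VH | ∃ e ∈ G.edgeFinset, ∃ h : Fin 2, a = g.q e h} ∪
        (↑g.Acenters : Set g.VH) ∪
        {a : g.VH | ∃ e ∈ G.edgeFinset, ∃ v : V, v ∈ e ∧
          IsBVertex g.H c (g.x e v) ∧ a = g.x e v} :=
  bVertices_characterization_general G wt hconn hwt g c hc
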